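/- Let G be a cubic graph and let S be a set of vertices such that |N_1(S)| = 2|S| and |N_2(S)| = 4|S|. Then the number of edges of G with both endpoints in S is exactly |S|/2, and every vertex of N_1(S) has exactly one neighbour in S. -/

import Mathlib

open Finset Filter
open scoped Classical BigOperators Topology

namespace BiasedWalk

/-- Configuration points: each vertex of `Fin n` has 3 points. -/
abbrev Pt (n : ℕ) := Fin n × Fin 3

/-- A pairing of the configuration points: a fixed-point-free involution,
uniform among which generates the random cubic configuration multigraph. -/
abbrev Pairing (n : ℕ) := {μ : Equiv.Perm (Pt n) // ∀ p, μ p ≠ p ∧ μ (μ p) = p}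

/-- The filter of large even `n`. -/
def evenAtTop : Filter ℕ := Filter.atTop ⊓ Filter.principal {n | Even n}

/-- Extend a finite tuple to an `ℕ`-indexed sequence (junk value beyond the end). -/
def extFin {n m : ℕ} (f : Fin (m + 1) → Pt n) : ℕ → Pt n :=
  fun j => if h : j < m + 1 then f ⟨j, h⟩ else f ⟨0, Nat.succ_pos m⟩

/-- Probability of the `i`-th step of the biased (unvisited-edge) walk, written at the level
of configuration points: the walk `w 0, w 1, w 2, …` lists the points visited, with
`w (2i+1) = μ (w (2i))` the traversal of the `i`-th edge, and `w (2i+2)` the point of the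
current vertex through which the walk leaves: uniform among points of red (untraversed)
edges if any, otherwise uniform among the 3 (blue) points of the vertex. -/
noncomputable def stepProb {n : ℕ} (μ : Pairing n) (w : ℕ → Pt n) (i : ℕ) : ℝ :=
  (if w (2 * i + 1) = μ.1 (w (2 * i)) then (1 : ℝ) else 0) *
  (let vis : Finset (Pt n) := ((List.range (2 * i + 2)).map w).toFinset
   let R : Finset (Pt n) := Finset.univ.filter
      (fun p : Pt n => p.1 = (w (2 * i + 1)).1 ∧ p ∉ vis ∧ μ.1 p ∉ vis)
   if R.Nonempty then (if w (2 * i + 2) ∈ R then (R.card : ℝ)⁻¹ else 0)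
   else (if (w (2 * i + 2)).1 = (w (2 * i + 1)).1 then (1 : ℝ) / 3 else 0))

/-- Probability that, for a fixed pairing `μ`, the biased walk `W_k` visits exactly the
points `w 0, …, w (2k)` in this order (the start point is uniform among all `3n` points). -/
noncomputable def pointWalkProb {n : ℕ} (μ : Pairing n) (k : ℕ) (w : ℕ → Pt n) : ℝ :=
  (1 / (3 * (n : ℝ))) * ∏ i ∈ Finset.range k, stepProb μ w i

/-- Joint probability over the uniform pairing and the walk randomness. -/
noncomputable def jointProb (n k : ℕ) (w : ℕ → Pt n) : ℝ :=
  (∑ μ : Pairing n, pointWalkProb μ k w) / (Fintype.card (Pairing n) : ℝ)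

/-- Number of distinct configuration points among the first `m` entries of the walk. -/
def dCount {n : ℕ} (w : ℕ → Pt n) (m : ℕ) : ℕ := (((List.range m).map w).toFinset).card

/-- Number of distinct vertices visited by `W_k`. -/
def vCount {n : ℕ} (w : ℕ → Pt n) (k : ℕ) : ℕ :=
  (((List.range (k + 1)).map (fun i => (w (2 * i)).1)).toFinset).card

/-- `E_G[C_E(t)]`: expected number of steps of the biased walk on the multigraph given by the
pairing `μ` until `t` distinct edges have been traversed (`= E[C(t) ⬝ 1_{C(t) < ∞}]`). -/
noncomputable def expCEdgeG {n : ℕ} (μ : Pairing n) (t : ℕ) : ℝ :=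
  ∑' k : ℕ, (k : ℝ) * ∑ f : Fin (2 * k + 1) → Pt n,
    (if 2 * t ≤ dCount (extFin f) (2 * k + 1) ∧ ∀ j < k, dCount (extFin f) (2 * j + 1) < 2 * t
     then pointWalkProb μ k (extFin f) else 0)

/-- `E_G[C_V(s)]`: expected number of steps until `s` distinct vertices have been visited. -/
noncomputable def expCVertG {n : ℕ} (μ : Pairing n) (s : ℕ) : ℝ :=
  ∑' k : ℕ, (k : ℝ) * ∑ f : Fin (2 * k + 1) → Pt n,
    (if s ≤ vCount (extFin f) k ∧ ∀ j < k, vCount (extFin f) j < s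
     then pointWalkProb μ k (extFin f) else 0)

/-- `E[C(t)]` over the joint randomness of the uniform pairing and the walk. -/
noncomputable def expCEdge (n t : ℕ) : ℝ :=
  (∑ μ : Pairing n, expCEdgeG μ t) / (Fintype.card (Pairing n) : ℝ)

/-- `E[C_V(s)]` over the joint randomness of the uniform pairing and the walk. -/
noncomputable def expCVert (n s : ℕ) : ℝ :=
  (∑ μ : Pairing n, expCVertG μ s) / (Fintype.card (Pairing n) : ℝ)

/-- Probability, over the joint randomness of the uniform pairing and the walk, that at some
step `k` the trajectory satisfies `Q` (decomposed over the first such step). -/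
noncomputable def walkEventProb (n : ℕ) (Q : Pairing n → (ℕ → Pt n) → ℕ → Prop) : ℝ :=
  (∑ μ : Pairing n, ∑' k : ℕ, ∑ f : Fin (2 * k + 1) → Pt n,
    (if Q μ (extFin f) k ∧ ∀ j < k, ¬Q μ (extFin f) j
     then pointWalkProb μ k (extFin f) else 0)) /
  (Fintype.card (Pairing n) : ℝ)

/-- `W_k = W(t)`: step `k` is the first at which `2t - 1` distinct points have been visited. -/
def atTime {n : ℕ} (t : ℕ) (w : ℕ → Pt n) (k : ℕ) : Prop :=
  dCount w (2 * k + 1) = 2 * t - 1 ∧ ∀ j < k, dCount w (2 * j + 1) < 2 * t - 1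

/-- Points visited by `W_k`. -/
def visSet {n : ℕ} (w : ℕ → Pt n) (k : ℕ) : Finset (Pt n) :=
  ((List.range (2 * k + 1)).map w).toFinset

/-- Number of red (untraversed) edge-endpoints at vertex `v` after `W_k`. -/
def redDeg {n : ℕ} (μ : Pairing n) (w : ℕ → Pt n) (k : ℕ) (v : Fin n) : ℕ :=
  (Finset.univ.filter (fun p : Pt n =>
    p.1 = v ∧ p ∉ visSet w k ∧ μ.1 p ∉ visSet w k)).card

/-- `X_i`: number of vertices incident with exactly `i` red (untraversed) edges. -/
def Xcount {n : ℕ} (μ : Pairing n) (w : ℕ → Pt n) (k i : ℕ) : ℕ :=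
  (Finset.univ.filter (fun v : Fin n => redDeg μ w k v = i)).card

/-- `X̄`: set of vertices incident with at least one red edge. -/
def XbarSet {n : ℕ} (μ : Pairing n) (w : ℕ → Pt n) (k : ℕ) : Finset (Fin n) :=
  Finset.univ.filter (fun v : Fin n => 1 ≤ redDeg μ w k v)

/-- The `i`-th edge traversed by the walk, as an unordered pair of points. -/
def eSeq {n : ℕ} (w : ℕ → Pt n) (i : ℕ) : Sym2 (Pt n) := s(w (2 * i), w (2 * i + 1))

/-- `Φ`: number of green edges, i.e. edges traversed exactly once by `W_k`. -/
def greenCount {n : ℕ} (w : ℕ → Pt n) (k : ℕ) : ℕ :=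
  ((((List.range k).map (eSeq w)).toFinset).filter
    (fun e => ((List.range k).map (eSeq w)).count e = 1)).card

/-- Vertex sequence `v_1, …, v_{k+1}` of the walk `W_k`. -/
def vList {n : ℕ} (w : ℕ → Pt n) (k : ℕ) : List (Fin n) :=
  (List.range (k + 1)).map (fun i => (w (2 * i)).1)

/-- `Y`: vertices visited and left exactly once by `W_k` (the green vertices). -/
def Yset {n : ℕ} (w : ℕ → Pt n) (k : ℕ) : Finset (Fin n) :=
  Finset.univ.filter (fun v : Fin n => (vList w k).count v = 1 ∧ v ≠ (w (2 * k)).1)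

/-- The contracted walk `⟨W⟩`: delete the points lying at vertices of `Y`, so that every
green bridge is replaced by a single (green) edge. -/
def contrWalk {n : ℕ} (w : ℕ → Pt n) (k : ℕ) : List (Pt n) :=
  ((List.range (2 * k + 1)).map w).filter (fun p => decide (p.1 ∉ Yset w k))

/-- `P([W_k] = [w])`: probability of the equivalence class of `w`. -/
noncomputable def classProb (n k : ℕ) (w : ℕ → Pt n) : ℝ :=
  ∑ f : Fin (2 * k + 1) → Pt n,
    (if contrWalk (extFin f) k = contrWalk w k ∧ Yset (extFin f) k = Yset w k
     then jointProb n k (extFin f) else 0)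

/-- The (simple) graph on the vertex set underlying the multigraph of a pairing. -/
def pairingGraph {n : ℕ} (μ : Pairing n) : SimpleGraph (Fin n) where
  Adj v u := v ≠ u ∧ ∃ p : Pt n, p.1 = v ∧ (μ.1 p).1 = u
  symm := ⟨by
    rintro v u ⟨hne, p, hp, hq⟩
    refine ⟨hne.symm, μ.1 p, hq, ?_⟩
    rw [(μ.2 p).2, hp]⟩
  loopless := ⟨by rintro v ⟨hne, -⟩; exact hne rfl⟩

/-- Connectivity of the multigraph given by a pairing. -/
def PConnected {n : ℕ} (μ : Pairing n) : Prop := (pairingGraph μ).Connected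

/-- The pairing produces a simple graph: no loops and no parallel edges. -/
def IsSimple {n : ℕ} (μ : Pairing n) : Prop :=
  (∀ p : Pt n, (μ.1 p).1 ≠ p.1) ∧
  (∀ p q : Pt n, p.1 = q.1 → (μ.1 p).1 = (μ.1 q).1 → q = p ∨ q = μ.1 p)

/-- Cyclic successor on `Fin k`. -/
def cycSucc {k : ℕ} (i : Fin k) : Fin k := ⟨(i.val + 1) % k, Nat.mod_lt _ i.pos⟩

/-- Directed rooted representations of cycles of length `k` in the multigraph of `μ`:
`c i` is the point through which the cycle leaves its `i`-th vertex.  Each cycle (counted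
up to rotation and reflection) has exactly `2k` such representations. -/
def cycleSeqs {n : ℕ} (μ : Pairing n) (k : ℕ) : Finset (Fin k → Pt n) :=
  Finset.univ.filter (fun c =>
    (∀ i : Fin k, (μ.1 (c i)).1 = (c (cycSucc i)).1 ∧ c (cycSucc i) ≠ μ.1 (c i)) ∧
    Function.Injective (fun i : Fin k => (c i).1))

/-- Number of cycles of length at most `ω` in the multigraph of `μ`. -/
def numCyclesUpTo {n : ℕ} (μ : Pairing n) (ω : ℕ) : ℕ :=
  ∑ k ∈ Finset.Icc 1 ω, (cycleSeqs μ k).card / (2 * k)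

/-- Directed representations of paths of length `r` in the multigraph of `μ` with both
endpoints in `S` and containing no edge joining two vertices of `S`; for `i < r`, `c i` is
the point through which the path leaves its `i`-th vertex, and `c r` is the final arrival
point.  Each such (undirected) path has exactly two directed representations. -/
noncomputable def mPathSeqs {n : ℕ} (μ : Pairing n) (S : Finset (Fin n)) (r : ℕ) :
    Finset (Fin (r + 1) → Pt n) :=
  Finset.univ.filter (fun c =>
    (∀ i : ℕ, (h : i + 1 ≤ r) →
      (μ.1 (c ⟨i, by omega⟩)).1 = (c ⟨i + 1, by omega⟩).1 ∧
      (i + 1 < r → c ⟨i + 1, by omega⟩ ≠ μ.1 (c ⟨i, by omega⟩)) ∧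
      (i + 1 = r → c ⟨i + 1, by omega⟩ = μ.1 (c ⟨i, by omega⟩))) ∧
    Function.Injective (fun i : Fin (r + 1) => (c i).1) ∧
    (c 0).1 ∈ S ∧ (c (Fin.last r)).1 ∈ S ∧
    (∀ i : ℕ, (h : i + 1 ≤ r) → ¬((c ⟨i, by omega⟩).1 ∈ S ∧ (μ.1 (c ⟨i, by omega⟩)).1 ∈ S)))

/-- Twice the number of edges of the multigraph of `μ` with both endpoints in `S`
(each such edge contributes both of its points). -/
def ptsWithin {n : ℕ} (μ : Pairing n) (S : Finset (Fin n)) : ℕ :=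
  (Finset.univ.filter (fun p : Pt n => p.1 ∈ S ∧ (μ.1 p).1 ∈ S)).card

/-- `S` is a root set of order `ℓ` in the multigraph of `μ`. -/
def IsRootSetM {n : ℕ} (μ : Pairing n) (S : Finset (Fin n)) (ℓ : ℝ) : Prop :=
  ℓ ^ 5 ≤ (S.card : ℝ) ∧
  (S.card : ℝ) / 2 ≤ (ptsWithin μ S : ℝ) / 2 ∧
  (ptsWithin μ S : ℝ) / 2 ≤ (1 / 2 + (ℓ ^ 3)⁻¹) * (S.card : ℝ) ∧
  (∑ r ∈ Finset.Icc 1 ⌊ℓ⌋₊, ((mPathSeqs μ S r).card : ℝ)) ≤ 2 * (S.card : ℝ) / ℓ ^ 3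

/-! ### Simple random walks on (cubic) simple graphs -/

/-- Transition matrix of the simple random walk on a cubic graph. -/
noncomputable def transMat {V : Type*} [Fintype V] (G : SimpleGraph V) : Matrix V V ℝ :=
  Matrix.of (fun v w => if G.Adj v w then (1 : ℝ) / 3 else 0)

/-- `λ(G)`: the second largest absolute value of an eigenvalue of the (symmetric) transition
matrix, expressed variationally on the orthogonal complement of the constants. -/
noncomputable def lambda2 {V : Type*} [Fintype V] (G : SimpleGraph V) : ℝ :=
  sSup {r : ℝ | ∃ f : V → ℝ, (∑ v, f v) = 0 ∧ (∑ v, (f v) ^ 2) = 1 ∧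
    r = |∑ v, ∑ w, f v * transMat G v w * f w|}

/-- `N_d(S)`: vertices at graph distance exactly `d` from the set `S`. -/
def sphereSet {V : Type*} (G : SimpleGraph V) (S : Set V) (d : ℕ) : Set V :=
  {v | (∃ s ∈ S, G.dist v s = d) ∧ ∀ s ∈ S, d ≤ G.dist v s}

/-- Probability that the simple random walk started from the stationary (uniform)
distribution first hits `S` at step `k`. -/
noncomputable def hitProb {V : Type*} [Fintype V] (G : SimpleGraph V) (S : Finset V)
    (k : ℕ) : ℝ :=
  ∑ f : Fin (k + 1) → V,
    (if f (Fin.last k) ∈ S ∧ (∀ i : Fin (k + 1), i ≠ Fin.last k → f i ∉ S) then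
      (1 / (Fintype.card V : ℝ)) * ∏ i : Fin k, transMat G (f i.castSucc) (f i.succ) else 0)

/-- `E_π[H(S)]`: expected hitting time of `S` from the stationary distribution. -/
noncomputable def expHit {V : Type*} [Fintype V] (G : SimpleGraph V) (S : Finset V) : ℝ :=
  ∑' k : ℕ, (k : ℝ) * hitProb G S k

/-- A cubic (3-regular) graph. -/
def IsCubic {V : Type*} (G : SimpleGraph V) : Prop := ∀ v, (G.neighborSet v).ncard = 3

/-- Directed rooted representations of cycles of length `k` in a simple graph. -/
noncomputable def gCycleSeqs {V : Type*} [Fintype V] (G : SimpleGraph V) (k : ℕ) : Finset (Fin k → V) :=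
  Finset.univ.filter (fun c =>
    Function.Injective c ∧ ∀ i : Fin k, G.Adj (c i) (c (cycSucc i)))

/-- Number of cycles of length at most `ω` of a simple graph (cycles have length `≥ 3`). -/
noncomputable def gNumCyclesUpTo {V : Type*} [Fintype V] (G : SimpleGraph V) (ω : ℕ) : ℕ :=
  ∑ k ∈ Finset.Icc 3 ω, (gCycleSeqs G k).card / (2 * k)

/-- Directed representations of paths of length `r` in a simple graph with endpoints in `S`
and containing no edge joining two vertices of `S`. -/
noncomputable def gPathSeqs {V : Type*} [Fintype V] (G : SimpleGraph V) (S : Finset V) (r : ℕ) :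
    Finset (Fin (r + 1) → V) :=
  Finset.univ.filter (fun c =>
    Function.Injective c ∧
    (∀ i : ℕ, (h : i + 1 ≤ r) → G.Adj (c ⟨i, by omega⟩) (c ⟨i + 1, by omega⟩)) ∧
    c 0 ∈ S ∧ c (Fin.last r) ∈ S ∧
    (∀ i : ℕ, (h : i + 1 ≤ r) → ¬(c ⟨i, by omega⟩ ∈ S ∧ c ⟨i + 1, by omega⟩ ∈ S)))

/-- Twice the number of edges with both endpoints in `S` (ordered adjacent pairs in `S`). -/
noncomputable def edgesIn2 {V : Type*} [Fintype V] (G : SimpleGraph V) (S : Finset V) : ℕ :=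
  (Finset.univ.filter (fun q : V × V => G.Adj q.1 q.2 ∧ q.1 ∈ S ∧ q.2 ∈ S)).card

/-- `S` is a root set of order `ℓ` in the simple graph `G`. -/
def IsRootSetG {V : Type*} [Fintype V] (G : SimpleGraph V) (S : Finset V) (ℓ : ℝ) : Prop :=
  ℓ ^ 5 ≤ (S.card : ℝ) ∧
  (S.card : ℝ) / 2 ≤ (edgesIn2 G S : ℝ) / 2 ∧
  (edgesIn2 G S : ℝ) / 2 ≤ (1 / 2 + (ℓ ^ 3)⁻¹) * (S.card : ℝ) ∧
  (∑ r ∈ Finset.Icc 1 ⌊ℓ⌋₊, ((gPathSeqs G S r).card : ℝ)) ≤ 2 * (S.card : ℝ) / ℓ ^ 3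

/-- `δ(t) = (3n - 2t)/(3n)`. -/
noncomputable def deltaR (n t : ℕ) : ℝ := ((3 * n : ℝ) - 2 * (t : ℝ)) / (3 * (n : ℝ))

end BiasedWalk

namespace BiasedWalk

/-- Fraction of pairings producing a simple graph (i.e. of random cubic graphs)
that satisfy `P`. -/
noncomputable def simpleFrac (n : ℕ) (P : Pairing n → Prop) : ℝ :=
  ((Finset.univ.filter (fun μ : Pairing n => IsSimple μ ∧ P μ)).card : ℝ) /
    ((Finset.univ.filter (fun μ : Pairing n => IsSimple μ)).card : ℝ)

/-- Fraction of all pairings (i.e. of random cubic configuration multigraphs)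
that satisfy `P`. -/
noncomputable def pairingFrac (n : ℕ) (P : Pairing n → Prop) : ℝ :=
  ((Finset.univ.filter (fun μ : Pairing n => P μ)).card : ℝ) /
    (Fintype.card (Pairing n) : ℝ)

end BiasedWalk

namespace BiasedWalk

open Finset Filter
open scoped Classical BigOperators Topology

/-!
Every vertex of `N₁` has a neighbour in `S` and every vertex of `N₂` one in `N₁`, so of the
`3|N₁|` edge-ends at `N₁` at least `|N₁|` go to `S` and at least `|N₂| = 2|N₁|` go to `N₂`. Both
bounds are therefore tight, and each vertex of `N₁` has exactly one neighbour in `S`. The `3|S|` edge-ends at `S` then split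
into the `|N₁| = 2|S|` going to `N₁` and `|S|` inside `S`.

`G.dist` is `0` between different components, so `sphereSet G S d` (for `d ≠ 0`) is empty unless
all of `S` lies in one component; the neighbours of `S` outside `S` lie in `N₁` only then.
-/

open SimpleGraph

section Sphere

variable {V : Type*} {G : SimpleGraph V} {S : Set V} {d : ℕ} {v : V}

lemma notMem_of_mem_sphereSet (hd : d ≠ 0) (hv : v ∈ sphereSet G S d) : v ∉ S :=
  fun hvS => hd (by simpa using hv.2 v hvS)

lemma reachable_of_mem_sphereSet (hd : d ≠ 0) (hv : v ∈ sphereSet G S d) {s : V}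
    (hs : s ∈ S) : G.Reachable v s :=
  Reachable.of_dist_ne_zero (by have := hv.2 s hs; omega)

lemma pairwise_reachable_of_sphereSet_nonempty (hd : d ≠ 0) (h : (sphereSet G S d).Nonempty) :
    ∀ s ∈ S, ∀ t ∈ S, G.Reachable s t := by
  obtain ⟨v, hv⟩ := h
  exact fun s hs t ht =>
    (reachable_of_mem_sphereSet hd hv hs).symm.trans (reachable_of_mem_sphereSet hd hv ht)

lemma exists_adj_of_mem_sphereSet_one (hv : v ∈ sphereSet G S 1) : ∃ s ∈ S, G.Adj v s := by
  obtain ⟨⟨s, hs, hvs⟩, -⟩ := hv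
  exact ⟨s, hs, dist_eq_one_iff_adj.mp hvs⟩

lemma mem_or_mem_sphereSet_one_of_adj (hS : ∀ s ∈ S, ∀ t ∈ S, G.Reachable s t) {s : V}
    (hs : s ∈ S) (hvs : G.Adj v s) : v ∈ S ∨ v ∈ sphereSet G S 1 := by
  refine or_iff_not_imp_left.mpr fun hv => ⟨⟨s, hs, dist_eq_one_iff_adj.mpr hvs⟩, fun t ht => ?_⟩
  have : G.dist v t ≠ 0 := dist_ne_zero_iff_ne_and_reachable.mpr
    ⟨fun hvt => hv (hvt ▸ ht), hvs.reachable.trans (hS s hs t ht)⟩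
  omega

lemma exists_adj_mem_sphereSet_of_mem_sphereSet_succ (hv : v ∈ sphereSet G S (d + 1)) :
    ∃ u ∈ sphereSet G S d, G.Adj v u := by
  obtain ⟨⟨s, hs, hvs⟩, hge⟩ := hv
  obtain ⟨p, hp⟩ := exists_walk_of_dist_ne_zero (hvs ▸ d.succ_ne_zero : G.dist v s ≠ 0)
  cases p with
  | nil => simp at hvs
  | @cons _ u _ hvu q =>
    have hle : ∀ t ∈ S, d ≤ G.dist u t := fun t ht => by
      have := hvu.reachable.dist_triangle_left t
      rw [dist_eq_one_iff_adj.mpr hvu] at this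
      have := hge t ht
      omega
    refine ⟨u, ⟨⟨s, hs, le_antisymm ?_ (hle s hs)⟩, hle⟩, hvu⟩
    have := dist_le q
    simp only [Walk.length_cons] at hp
    omega

end Sphere

section Counting

variable {V : Type*} [Fintype V] {G : SimpleGraph V} {d : ℕ}

lemma IsCubic.isRegularOfDegree (hG : IsCubic G) : G.IsRegularOfDegree 3 := fun v => by
  rw [← card_neighborFinset_eq_degree, neighborFinset_def, ← Set.ncard_eq_toFinset_card', hG v]

lemma card_interedges_eq_sum (s t : Finset V) :
    #(G.interedges s t) = ∑ v ∈ s, #(G.neighborFinset v ∩ t) := by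
  rw [interedges_def, card_filter, sum_product]
  refine sum_congr rfl fun v _ => ?_
  rw [← card_filter]
  congr 1
  ext w
  simp [and_comm]

lemma sum_card_neighborFinset_inter_comm (s t : Finset V) :
    ∑ v ∈ s, #(G.neighborFinset v ∩ t) = ∑ v ∈ t, #(G.neighborFinset v ∩ s) := by
  rw [← card_interedges_eq_sum, ← card_interedges_eq_sum]
  have : Std.Symm G.Adj := ⟨fun _ _ h => h.symm⟩
  exact Rel.card_interedges_comm s t

lemma card_neighborFinset_inter_add_card_neighborFinset_inter {t u : Finset V}
    (h : Disjoint t u) (v : V) :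
    #(G.neighborFinset v ∩ t) + #(G.neighborFinset v ∩ u) = #(G.neighborFinset v ∩ (t ∪ u)) := by
  rw [inter_union_distrib_left, card_union_of_disjoint
    (h.mono inter_subset_right inter_subset_right)]

lemma one_le_card_neighborFinset_inter {s : Finset V} {v : V} (h : ∃ a ∈ s, G.Adj v a) :
    1 ≤ #(G.neighborFinset v ∩ s) := by
  obtain ⟨a, ha, hva⟩ := h
  exact card_pos.mpr ⟨a, mem_inter.mpr ⟨(mem_neighborFinset G v a).mpr hva, ha⟩⟩

lemma edgesIn2_eq_card_interedges (S : Finset V) : edgesIn2 G S = #(G.interedges S S) := by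
  unfold edgesIn2
  congr 1
  ext ⟨a, b⟩
  simp only [mem_filter, mem_univ, true_and, mem_interedges_iff]
  tauto

lemma card_neighborFinset_inter_eq_one_of_card_le (hG : G.IsRegularOfDegree d) {A B C : Finset V}
    (hAC : Disjoint A C) (hB : ∀ v ∈ B, ∃ a ∈ A, G.Adj v a) (hC : ∀ v ∈ C, ∃ b ∈ B, G.Adj v b)
    (hcard : d * #B ≤ #B + #C) : ∀ v ∈ B, #(G.neighborFinset v ∩ A) = 1 := by
  have hA : ∀ v ∈ B, 1 ≤ #(G.neighborFinset v ∩ A) :=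
    fun v hv => one_le_card_neighborFinset_inter (hB v hv)
  have hBC : #C ≤ ∑ v ∈ B, #(G.neighborFinset v ∩ C) := by
    rw [sum_card_neighborFinset_inter_comm, card_eq_sum_ones]
    exact sum_le_sum fun v hv => one_le_card_neighborFinset_inter (hC v hv)
  have hdeg : ∑ v ∈ B, #(G.neighborFinset v ∩ A) + ∑ v ∈ B, #(G.neighborFinset v ∩ C) ≤
      d * #B := by
    rw [← sum_add_distrib, mul_comm, ← smul_eq_mul, ← sum_const]
    refine sum_le_sum fun v _ => ?_
    rw [card_neighborFinset_inter_add_card_neighborFinset_inter hAC, ← hG v,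
      ← card_neighborFinset_eq_degree]
    exact card_le_card inter_subset_left
  have hsum : ∑ v ∈ B, 1 = ∑ v ∈ B, #(G.neighborFinset v ∩ A) := by
    refine le_antisymm (sum_le_sum hA) ?_
    rw [← card_eq_sum_ones]
    omega
  exact fun v hv => ((sum_eq_sum_iff_of_le hA).mp hsum v hv).symm

lemma card_interedges_add_card_eq_mul (hG : G.IsRegularOfDegree d) {A B : Finset V}
    (hAB : Disjoint A B) (hA : ∀ v ∈ A, G.neighborFinset v ⊆ A ∪ B)
    (hB : ∀ v ∈ B, #(G.neighborFinset v ∩ A) = 1) : #(G.interedges A A) + #B = d * #A := by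
  rw [card_interedges_eq_sum, card_eq_sum_ones B, ← sum_congr rfl hB,
    sum_card_neighborFinset_inter_comm B A, ← sum_add_distrib, mul_comm, ← smul_eq_mul,
    ← sum_const]
  refine sum_congr rfl fun v hv => ?_
  rw [card_neighborFinset_inter_add_card_neighborFinset_inter hAB, inter_eq_left.mpr (hA v hv),
    card_neighborFinset_eq_degree, hG v]

end Counting

theorem statement10 {V : Type*} [Fintype V] (G : SimpleGraph V) (hG : IsCubic G)
    (S : Finset V)
    (h1 : (sphereSet G (↑S) 1).ncard = 2 * S.card)
    (h2 : (sphereSet G (↑S) 2).ncard = 4 * S.card) :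
    edgesIn2 G S = S.card ∧
    ∀ v ∈ sphereSet G (↑S) 1, (G.neighborSet v ∩ ↑S).ncard = 1 := by
  rw [Set.ncard_eq_toFinset_card'] at h1 h2
  set N₁ := (sphereSet G S 1).toFinset
  set N₂ := (sphereSet G S 2).toFinset
  have hreach : ∀ s ∈ S, ∀ t ∈ S, G.Reachable s t := by
    rcases S.eq_empty_or_nonempty with rfl | hS
    · simp
    · refine pairwise_reachable_of_sphereSet_nonempty one_ne_zero (Set.toFinset_nonempty.mp ?_)
      exact card_pos.mp (by rw [h1]; have := hS.card_pos; omega)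
  have hdisj₁ : Disjoint S N₁ := disjoint_right.mpr fun v hv =>
    notMem_of_mem_sphereSet one_ne_zero (Set.mem_toFinset.mp hv)
  have hdisj₂ : Disjoint S N₂ := disjoint_right.mpr fun v hv =>
    notMem_of_mem_sphereSet two_ne_zero (Set.mem_toFinset.mp hv)
  have hone : ∀ v ∈ N₁, #(G.neighborFinset v ∩ S) = 1 := by
    refine card_neighborFinset_inter_eq_one_of_card_le hG.isRegularOfDegree hdisj₂
      (fun v hv => exists_adj_of_mem_sphereSet_one (Set.mem_toFinset.mp hv))
      (fun v hv => ?_) (by omega)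
    obtain ⟨u, hu, hvu⟩ := exists_adj_mem_sphereSet_of_mem_sphereSet_succ (d := 1)
      (Set.mem_toFinset.mp hv)
    exact ⟨u, Set.mem_toFinset.mpr hu, hvu⟩
  have hnbr : ∀ s ∈ S, G.neighborFinset s ⊆ S ∪ N₁ := fun s hs v hv =>
    mem_union.mpr <| (mem_or_mem_sphereSet_one_of_adj hreach hs
      ((mem_neighborFinset G s v).mp hv).symm).imp_right Set.mem_toFinset.mpr
  have hedges := card_interedges_add_card_eq_mul hG.isRegularOfDegree hdisj₁ hnbr hone
  refine ⟨by rw [edgesIn2_eq_card_interedges]; omega, fun v hv => ?_⟩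
  rw [← coe_neighborFinset, ← coe_inter, Set.ncard_coe_finset]
  exact hone v (Set.mem_toFinset.mpr hv)

end BiasedWalk
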